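/- arXiv:2112.14105 — 5 statements merged into one kernel-verified Lean document; each statement's English description precedes it below -/
import Mathlib

section
/- Assume a11 < 0, a12 < 0, a21 > 0, a22 < 0, that A₂ := d11 d22 − d21 ξ u* v* > 0, that A₁ := d11 a22 + d22 a11 − a21 ξ u* − d21 v* a12 > 0, and that A₃ := A₁² − 4 A₂ (a11 a22 − a12 a21) > 0. Set n₁ = ℓ √x̃₁ and n₂ = ℓ √x̃₂ where x̃₁ = (A₁ − √A₃)/(2A₂), x̃₂ = (A₁ + √A₃)/(2A₂). Then for every n ∈ ℕ, the quantity Q_n := J_n² − D_n² satisfies Q_n < 0 whenever n₁ < n < n₂, and Q_n ≥ 0 whenever n ≤ n₁ or n ≥ n₂. -/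
/-!
With `y = (n / ℓ)²` one has `Jₙ - Dₙ = A₂ y² - A₁ y + det A = A₂ (y - x̃₁)(y - x̃₂)`, while the sign
conditions make every coefficient of `Jₙ + Dₙ`, as a polynomial in `y`, nonnegative and its constant
term `det A` positive. Hence `Qₙ = (Jₙ + Dₙ)(Jₙ - Dₙ)` has the sign of `(y - x̃₁)(y - x̃₂)`, and
`n₁ < n ↔ x̃₁ < y`, `n < n₂ ↔ y < x̃₂` because `n / ℓ > 0`.
-/

/-- `Jₙ = d11 d22 n⁴/ℓ⁴ - (d11 a22 + d22 a11 - a21 ξ u*) n²/ℓ² + Det(A)`. -/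
noncomputable def Jn (ℓ d11 d22 ξ ustar a11 a12 a21 a22 : ℝ) (n : ℕ) : ℝ :=
  d11 * d22 * (n : ℝ) ^ 4 / ℓ ^ 4
    - (d11 * a22 + d22 * a11 - a21 * ξ * ustar) * (n : ℝ) ^ 2 / ℓ ^ 2
    + (a11 * a22 - a12 * a21)

/-- `Dₙ = d21 ξ u* v* n⁴/ℓ⁴ - d21 v* a12 n²/ℓ²`. -/
noncomputable def Dn (ℓ d21 ξ ustar vstar a12 : ℝ) (n : ℕ) : ℝ :=
  d21 * ξ * ustar * vstar * (n : ℝ) ^ 4 / ℓ ^ 4 - d21 * vstar * a12 * (n : ℝ) ^ 2 / ℓ ^ 2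

section Quadratic

variable {K : Type*} [Field K] [LinearOrder K] [IsStrictOrderedRing K] {a b c s r₁ r₂ x : K}

theorem quadratic_eq_mul_sub_roots (ha : a ≠ 0) (hs : s ^ 2 = b ^ 2 - 4 * a * c) :
    a * x ^ 2 - b * x + c = a * (x - (b - s) / (2 * a)) * (x - (b + s) / (2 * a)) := by
  field_simp
  linear_combination hs

theorem mul_sub_mul_sub_neg_of_between (ha : 0 < a) (h₁ : r₁ < x) (h₂ : x < r₂) :
    a * (x - r₁) * (x - r₂) < 0 :=
  mul_neg_of_pos_of_neg (mul_pos ha (sub_pos.2 h₁)) (sub_neg.2 h₂)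

theorem mul_sub_mul_sub_nonneg_of_not_between (ha : 0 ≤ a) (hr : r₁ ≤ r₂)
    (h : x ≤ r₁ ∨ r₂ ≤ x) : 0 ≤ a * (x - r₁) * (x - r₂) := by
  rcases h with h | h
  · exact mul_nonneg_of_nonpos_of_nonpos
      (mul_nonpos_of_nonneg_of_nonpos ha (sub_nonpos.2 h)) (by linarith)
  · exact mul_nonneg (mul_nonneg ha (by linarith)) (sub_nonneg.2 h)

end Quadratic

section Sqrt

variable {ℓ t x : ℝ}

theorem mul_sqrt_lt_iff (hℓ : 0 < ℓ) (ht : 0 < t) : ℓ * √x < t ↔ x < (t / ℓ) ^ 2 := by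
  rw [← lt_div_iff₀' hℓ, Real.sqrt_lt' (div_pos ht hℓ)]

theorem mul_sqrt_le_iff (hℓ : 0 < ℓ) (ht : 0 < t) : ℓ * √x ≤ t ↔ x ≤ (t / ℓ) ^ 2 := by
  rw [← le_div_iff₀' hℓ, Real.sqrt_le_left (div_pos ht hℓ).le]

end Sqrt

section Coefficients

variable {ℓ d11 d22 d21 ξ ustar vstar a11 a12 a21 a22 : ℝ} {n : ℕ}

theorem Jn_sub_Dn :
    Jn ℓ d11 d22 ξ ustar a11 a12 a21 a22 n - Dn ℓ d21 ξ ustar vstar a12 n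
      = (d11 * d22 - d21 * ξ * ustar * vstar) * (((n : ℝ) / ℓ) ^ 2) ^ 2
        - (d11 * a22 + d22 * a11 - a21 * ξ * ustar - d21 * vstar * a12) * ((n : ℝ) / ℓ) ^ 2
        + (a11 * a22 - a12 * a21) := by
  unfold Jn Dn
  ring

theorem Jn_add_Dn :
    Jn ℓ d11 d22 ξ ustar a11 a12 a21 a22 n + Dn ℓ d21 ξ ustar vstar a12 n
      = (d11 * d22 + d21 * ξ * ustar * vstar) * (((n : ℝ) / ℓ) ^ 2) ^ 2
        + (a21 * ξ * ustar - d11 * a22 - d22 * a11 - d21 * vstar * a12) * ((n : ℝ) / ℓ) ^ 2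
        + (a11 * a22 - a12 * a21) := by
  unfold Jn Dn
  ring

theorem det_pos_of_signs (ha11 : a11 < 0) (ha12 : a12 < 0) (ha21 : 0 < a21) (ha22 : a22 < 0) :
    0 < a11 * a22 - a12 * a21 := by
  nlinarith [mul_pos_of_neg_of_neg ha11 ha22, mul_neg_of_neg_of_pos ha12 ha21]

theorem Jn_add_Dn_pos (h11 : 0 ≤ d11) (h22 : 0 ≤ d22) (h21 : 0 ≤ d21) (hξ : 0 ≤ ξ)
    (hu : 0 ≤ ustar) (hv : 0 ≤ vstar)
    (ha11 : a11 < 0) (ha12 : a12 < 0) (ha21 : 0 < a21) (ha22 : a22 < 0) :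
    0 < Jn ℓ d11 d22 ξ ustar a11 a12 a21 a22 n + Dn ℓ d21 ξ ustar vstar a12 n := by
  have hquartic : 0 ≤ d11 * d22 + d21 * ξ * ustar * vstar := by positivity
  have hquadratic : 0 ≤ a21 * ξ * ustar - d11 * a22 - d22 * a11 - d21 * vstar * a12 := by
    nlinarith [mul_nonneg h11 (neg_nonneg.2 ha22.le), mul_nonneg h22 (neg_nonneg.2 ha11.le),
      mul_nonneg (mul_nonneg h21 hv) (neg_nonneg.2 ha12.le), mul_nonneg (mul_nonneg ha21.le hξ) hu]
  rw [Jn_add_Dn]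
  have := det_pos_of_signs ha11 ha12 ha21 ha22
  positivity

end Coefficients

theorem stmt_12_general (ℓ d11 d22 d21 ξ ustar vstar a11 a12 a21 a22 : ℝ)
    (hℓ : 0 < ℓ) (h11 : 0 ≤ d11) (h22 : 0 ≤ d22) (h21 : 0 ≤ d21) (hξ : 0 ≤ ξ)
    (hu : 0 < ustar) (hv : 0 < vstar)
    (ha11 : a11 < 0) (ha12 : a12 < 0) (ha21 : 0 < a21) (ha22 : a22 < 0)
    (A1 A2 A3 : ℝ)
    (hA1def : A1 = d11 * a22 + d22 * a11 - a21 * ξ * ustar - d21 * vstar * a12)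
    (hA2def : A2 = d11 * d22 - d21 * ξ * ustar * vstar)
    (hA3def : A3 = A1 ^ 2 - 4 * A2 * (a11 * a22 - a12 * a21))
    (hA2 : 0 < A2) (hA3 : 0 < A3)
    (x1 x2 n1 n2 : ℝ)
    (hx1 : x1 = (A1 - Real.sqrt A3) / (2 * A2))
    (hx2 : x2 = (A1 + Real.sqrt A3) / (2 * A2))
    (hn1 : n1 = ℓ * Real.sqrt x1) (hn2 : n2 = ℓ * Real.sqrt x2) :
    ∀ n : ℕ, 1 ≤ n →
      ((n1 < (n : ℝ) ∧ (n : ℝ) < n2 →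
          (Jn ℓ d11 d22 ξ ustar a11 a12 a21 a22 n) ^ 2
            - (Dn ℓ d21 ξ ustar vstar a12 n) ^ 2 < 0) ∧
       (((n : ℝ) ≤ n1 ∨ n2 ≤ (n : ℝ)) →
          0 ≤ (Jn ℓ d11 d22 ξ ustar a11 a12 a21 a22 n) ^ 2
            - (Dn ℓ d21 ξ ustar vstar a12 n) ^ 2)) := by
  intro n hn
  have hpos : (0 : ℝ) < n := by exact_mod_cast hn
  have hQ : Jn ℓ d11 d22 ξ ustar a11 a12 a21 a22 n ^ 2 - Dn ℓ d21 ξ ustar vstar a12 n ^ 2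
      = (Jn ℓ d11 d22 ξ ustar a11 a12 a21 a22 n + Dn ℓ d21 ξ ustar vstar a12 n)
        * (A2 * (((n : ℝ) / ℓ) ^ 2 - x1) * (((n : ℝ) / ℓ) ^ 2 - x2)) := by
    rw [sq_sub_sq, Jn_sub_Dn, ← hA1def, ← hA2def, hx1, hx2,
      quadratic_eq_mul_sub_roots hA2.ne' (by rw [Real.sq_sqrt hA3.le, hA3def])]
  have hJD := Jn_add_Dn_pos h11 h22 h21 hξ hu.le hv.le ha11 ha12 ha21 ha22 (ℓ := ℓ) (n := n)
  have hx12 : x1 ≤ x2 := by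
    rw [hx1, hx2]
    gcongr
    linarith [Real.sqrt_nonneg A3]
  have hlt₁ : n1 < n ↔ x1 < ((n : ℝ) / ℓ) ^ 2 := hn1 ▸ mul_sqrt_lt_iff hℓ hpos
  have hle₁ : n ≤ n1 ↔ ((n : ℝ) / ℓ) ^ 2 ≤ x1 := by rw [← not_lt, hlt₁, not_lt]
  have hle₂ : n2 ≤ n ↔ x2 ≤ ((n : ℝ) / ℓ) ^ 2 := hn2 ▸ mul_sqrt_le_iff hℓ hpos
  have hlt₂ : n < n2 ↔ ((n : ℝ) / ℓ) ^ 2 < x2 := by rw [← not_le, hle₂, not_le]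
  rw [hQ, hlt₁, hlt₂, hle₁, hle₂]
  exact ⟨fun ⟨h₁, h₂⟩ ↦ mul_neg_of_pos_of_neg hJD (mul_sub_mul_sub_neg_of_between hA2 h₁ h₂),
    fun h ↦ mul_nonneg hJD.le (mul_sub_mul_sub_nonneg_of_not_between hA2.le hx12 h)⟩

/-- Under the sign conditions and the conditions of Case 4.2,
`Qₙ = Jₙ² - Dₙ² < 0` for `n₁ < n < n₂`, and `Qₙ ≥ 0` for `n ≤ n₁` or `n ≥ n₂`,
where `n₁ = ℓ√x̃₁` and `n₂ = ℓ√x̃₂`. -/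
theorem stmt_12 (ℓ d11 d22 d21 ξ ustar vstar a11 a12 a21 a22 : ℝ)
    (hℓ : 0 < ℓ) (h11 : 0 ≤ d11) (h22 : 0 ≤ d22) (h21 : 0 ≤ d21) (hξ : 0 ≤ ξ)
    (hu : 0 < ustar) (hv : 0 < vstar)
    (ha11 : a11 < 0) (ha12 : a12 < 0) (ha21 : 0 < a21) (ha22 : a22 < 0)
    (A1 A2 A3 : ℝ)
    (hA1def : A1 = d11 * a22 + d22 * a11 - a21 * ξ * ustar - d21 * vstar * a12)
    (hA2def : A2 = d11 * d22 - d21 * ξ * ustar * vstar)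
    (hA3def : A3 = A1 ^ 2 - 4 * A2 * (a11 * a22 - a12 * a21))
    (hA1 : 0 < A1) (hA2 : 0 < A2) (hA3 : 0 < A3)
    (x1 x2 n1 n2 : ℝ)
    (hx1 : x1 = (A1 - Real.sqrt A3) / (2 * A2))
    (hx2 : x2 = (A1 + Real.sqrt A3) / (2 * A2))
    (hn1 : n1 = ℓ * Real.sqrt x1) (hn2 : n2 = ℓ * Real.sqrt x2) :
    ∀ n : ℕ, 1 ≤ n →
      ((n1 < (n : ℝ) ∧ (n : ℝ) < n2 →
          (Jn ℓ d11 d22 ξ ustar a11 a12 a21 a22 n) ^ 2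
            - (Dn ℓ d21 ξ ustar vstar a12 n) ^ 2 < 0) ∧
       (((n : ℝ) ≤ n1 ∨ n2 ≤ (n : ℝ)) →
          0 ≤ (Jn ℓ d11 d22 ξ ustar a11 a12 a21 a22 n) ^ 2
            - (Dn ℓ d21 ξ ustar vstar a12 n) ^ 2)) :=
  stmt_12_general ℓ d11 d22 d21 ξ ustar vstar a11 a12 a21 a22 hℓ h11 h22 h21 hξ hu hv ha11 ha12 ha21
    ha22 A1 A2 A3 hA1def hA2def hA3def hA2 hA3 x1 x2 n1 n2 hx1 hx2 hn1 hn2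
end

section
/- Let T < 0, J ∈ ℝ and D > 0 be real numbers, and let ω > 0 satisfy ω⁴ + (T² − 2J) ω² + (J² − D²) = 0. Then (ω² − J)² + T² ω² = D², in particular |(ω² − J)/D| ≤ 1, and for every j ∈ ℕ₀ the number τ_j = (arccos((ω² − J)/D) + 2jπ)/ω satisfies cos(ω τ_j) = (ω² − J)/D and sin(ω τ_j) = −T ω / D > 0. -/
/-- If `ω > 0` satisfies the quartic `ω⁴ + (T²-2J)ω² + (J²-D²) = 0`
with `T < 0` and `D > 0`, then `(ω²-J)² + T²ω² = D²` and for each `j ∈ ℕ₀` the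
delay `τⱼ = (arccos((ω²-J)/D) + 2jπ)/ω` satisfies `cos(ωτⱼ) = (ω²-J)/D` and
`sin(ωτⱼ) = -Tω/D > 0`. -/
theorem stmt_13 (T J D ω : ℝ) (hT : T < 0) (hD : 0 < D) (hω : 0 < ω)
    (heq : ω ^ 4 + (T ^ 2 - 2 * J) * ω ^ 2 + (J ^ 2 - D ^ 2) = 0) :
    (ω ^ 2 - J) ^ 2 + T ^ 2 * ω ^ 2 = D ^ 2 ∧
    |(ω ^ 2 - J) / D| ≤ 1 ∧
    ∀ j : ℕ,
      Real.cos (ω * ((Real.arccos ((ω ^ 2 - J) / D) + 2 * (j : ℝ) * Real.pi) / ω))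
        = (ω ^ 2 - J) / D ∧
      Real.sin (ω * ((Real.arccos ((ω ^ 2 - J) / D) + 2 * (j : ℝ) * Real.pi) / ω))
        = -(T * ω) / D ∧
      0 < -(T * ω) / D := by
  have hkey : (ω ^ 2 - J) ^ 2 + T ^ 2 * ω ^ 2 = D ^ 2 := by nlinarith [heq]
  have hDne : D ≠ 0 := ne_of_gt hD
  set x := (ω ^ 2 - J) / D with hx
  have hx2 : x ^ 2 ≤ 1 := by
    rw [hx, div_pow, div_le_one (by positivity)]
    nlinarith [sq_nonneg (T * ω)]
  have habs : |x| ≤ 1 := abs_le.mpr ⟨by nlinarith, by nlinarith⟩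
  have hspos : 0 < -(T * ω) / D := by
    apply div_pos _ hD
    nlinarith
  refine ⟨hkey, habs, fun j => ?_⟩
  have harg : ω * ((Real.arccos x + 2 * (j : ℝ) * Real.pi) / ω)
      = Real.arccos x + (j : ℤ) * (2 * Real.pi) := by
    push_cast
    field_simp
  rw [harg, Real.cos_add_int_mul_two_pi, Real.sin_add_int_mul_two_pi]
  have hmem := abs_le.mp habs
  refine ⟨Real.cos_arccos hmem.1 hmem.2, ?_, hspos⟩
  rw [Real.sin_arccos]
  have h1 : 1 - x ^ 2 = (-(T * ω) / D) ^ 2 := by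
    rw [hx]
    field_simp
    nlinarith [hkey]
  rw [h1, Real.sqrt_sq hspos.le]
end

section
/- Let T < 0, J ∈ ℝ and D > 0 be real numbers, set P = T² − 2J and Q = J² − D², assume Q < 0, and let ω = √((−P + √(P² − 4Q))/2). Let τ ≥ 0 satisfy cos(ωτ) = (ω² − J)/D and sin(ωτ) = −Tω/D. Then 2 cos(ωτ)/D − T sin(ωτ)/(ωD) = (2ω³ + ω(T² − 2J))/(ω D²) = √(P² − 4Q)/D² > 0. -/
/-- The transversality quantity at a purely imaginary characteristic
root: `2cos(ωτ)/D - T sin(ωτ)/(ωD) = (2ω³ + ω(T²-2J))/(ωD²) = √(P²-4Q)/D² > 0`. -/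
theorem stmt_14 (T J D ω τ : ℝ) (hT : T < 0) (hD : 0 < D)
    (P Q : ℝ) (hP : P = T ^ 2 - 2 * J) (hQ : Q = J ^ 2 - D ^ 2) (hQneg : Q < 0)
    (hω : ω = Real.sqrt ((-P + Real.sqrt (P ^ 2 - 4 * Q)) / 2))
    (hτ : 0 ≤ τ)
    (hcos : Real.cos (ω * τ) = (ω ^ 2 - J) / D)
    (hsin : Real.sin (ω * τ) = -(T * ω) / D) :
    2 * Real.cos (ω * τ) / D - T * Real.sin (ω * τ) / (ω * D)
      = (2 * ω ^ 3 + ω * (T ^ 2 - 2 * J)) / (ω * D ^ 2) ∧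
    (2 * ω ^ 3 + ω * (T ^ 2 - 2 * J)) / (ω * D ^ 2)
      = Real.sqrt (P ^ 2 - 4 * Q) / D ^ 2 ∧
    0 < Real.sqrt (P ^ 2 - 4 * Q) / D ^ 2 := by
  have hdisc : 0 < P ^ 2 - 4 * Q := by nlinarith [sq_nonneg P]
  have hs : 0 < Real.sqrt (P ^ 2 - 4 * Q) := Real.sqrt_pos.mpr hdisc
  have hsP : P < Real.sqrt (P ^ 2 - 4 * Q) := by
    nlinarith [Real.sq_sqrt hdisc.le, Real.sqrt_nonneg (P ^ 2 - 4 * Q),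
      sq_nonneg (P - Real.sqrt (P ^ 2 - 4 * Q))]
  have harg : 0 < (-P + Real.sqrt (P ^ 2 - 4 * Q)) / 2 := by linarith
  have hωpos : 0 < ω := hω ▸ Real.sqrt_pos.mpr harg
  have hωsq : ω ^ 2 = (-P + Real.sqrt (P ^ 2 - 4 * Q)) / 2 := by
    rw [hω, Real.sq_sqrt harg.le]
  have hkey : 2 * ω ^ 2 + P = Real.sqrt (P ^ 2 - 4 * Q) := by linarith
  have hD' : D ≠ 0 := hD.ne'
  have hω' : ω ≠ 0 := hωpos.ne'
  refine ⟨?_, ?_, ?_⟩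
  · rw [hcos, hsin]; field_simp; ring
  · rw [show T ^ 2 - 2 * J = P from hP.symm, ← hkey]
    field_simp
  · positivity
end

section
/- Let ω_c > 0, τ_c > 0, k ≥ 0 be real numbers, let D₁, D₂, A be real 2×2 matrices and g ∈ ℂ². Assume the complex matrix M = 2iω_c I₂ + τ_c k D₁ + τ_c k e^{−2iω_c} D₂ − τ_c A is invertible, and define h : [−1,0] → ℂ² by h(θ) = e^{2iω_c θ} M^{−1} g. Then h′(θ) = 2iω_c h(θ) for all θ ∈ [−1,0], and h′(0) + τ_c k (D₁ h(0) + D₂ h(−1)) − τ_c A h(0) = g. -/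
open Matrix

/-!
The ansatz `h(θ) = e^{λθ} v` with `λ = 2iω_c` turns the differential equation into `h' = λ h`
and the boundary operator `h ↦ h'(0) + τ_c k (D₁ h(0) + D₂ h(-1)) - τ_c A h(0)` into
multiplication of `v` by the characteristic matrix `M = Δ(λ)`; hence `v = M⁻¹ g` solves it.
-/

theorem hasDerivAt_cexp_mul_smul {E : Type*} [NormedAddCommGroup E] [NormedSpace ℂ E]
    (c : ℂ) (v : E) (t : ℝ) :
    HasDerivAt (fun t : ℝ => Complex.exp (c * t) • v) (c • Complex.exp (c * t) • v) t := by
  have hexp : HasDerivAt (fun z : ℂ => Complex.exp (c * z)) (Complex.exp (c * t) * c) t :=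
    ((hasDerivAt_id (t : ℂ)).const_mul c).cexp.congr_deriv (by simp)
  simpa [smul_smul, mul_comm] using hexp.comp_ofReal.smul_const v

theorem smul_one_add_smul_add_smul_sub_smul_mulVec {R n : Type*} [CommRing R] [Fintype n]
    [DecidableEq n] (c a b e : R) (P Q B : Matrix n n R) (v : n → R) :
    (c • 1 + a • P + (a * e) • Q - b • B) *ᵥ v
      = c • v + a • (P *ᵥ v + Q *ᵥ e • v) - b • (B *ᵥ v) := by
  simp only [sub_mulVec, add_mulVec, smul_mulVec, one_mulVec, mulVec_smul, smul_add, mul_smul, add_assoc]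

theorem mulVec_nonsing_inv_mulVec {R n : Type*} [CommRing R] [Fintype n] [DecidableEq n]
    {M : Matrix n n R} (hM : IsUnit M) (g : n → R) : M *ᵥ (M⁻¹ *ᵥ g) = g := by
  rw [mulVec_mulVec, mul_nonsing_inv _ ((isUnit_iff_isUnit_det M).mp hM), one_mulVec]

theorem stmt_18_general (ωc τc k : ℝ)
    (D1 D2 A : Matrix (Fin 2) (Fin 2) ℝ) (g : Fin 2 → ℂ)
    (M : Matrix (Fin 2) (Fin 2) ℂ)
    (hM : M = (2 * (ωc : ℂ) * Complex.I) • (1 : Matrix (Fin 2) (Fin 2) ℂ)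
        + ((τc * k : ℝ) : ℂ) • D1.map Complex.ofReal
        + (((τc * k : ℝ) : ℂ) * Complex.exp (-(2 * (ωc : ℂ) * Complex.I))) •
            D2.map Complex.ofReal
        - ((τc : ℝ) : ℂ) • A.map Complex.ofReal)
    (hMinv : IsUnit M)
    (h : ℝ → Fin 2 → ℂ)
    (hh : ∀ θ : ℝ, h θ = Complex.exp (2 * (ωc : ℂ) * Complex.I * (θ : ℂ)) • (M⁻¹ *ᵥ g)) :
    (∀ θ ∈ Set.Icc (-1 : ℝ) 0, HasDerivAt h ((2 * (ωc : ℂ) * Complex.I) • h θ) θ) ∧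
    deriv h 0 + ((τc * k : ℝ) : ℂ) •
        (D1.map Complex.ofReal *ᵥ h 0 + D2.map Complex.ofReal *ᵥ h (-1))
      - ((τc : ℝ) : ℂ) • (A.map Complex.ofReal *ᵥ h 0) = g := by
  set c : ℂ := 2 * (ωc : ℂ) * Complex.I
  have hderiv (θ : ℝ) : HasDerivAt h (c • h θ) θ := by
    rw [funext hh]
    exact hasDerivAt_cexp_mul_smul c _ θ
  refine ⟨fun θ _ => hderiv θ, ?_⟩
  rw [(hderiv 0).deriv, hh 0, hh (-1)]
  simp only [Complex.ofReal_zero, mul_zero, Complex.exp_zero, one_smul, Complex.ofReal_neg,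
    Complex.ofReal_one, mul_neg_one]
  rw [← smul_one_add_smul_add_smul_sub_smul_mulVec, ← hM, mulVec_nonsing_inv_mulVec hMinv]

/-- The explicit solution of the boundary-value problem for the
second-order center-manifold coefficient: with
`M = 2iω_c I₂ + τ_c k D₁ + τ_c k e^{-2iω_c} D₂ - τ_c A` invertible and
`h(θ) = e^{2iω_c θ} M⁻¹ g`, we have `h'(θ) = 2iω_c h(θ)` on `[-1,0]` and
`h'(0) + τ_c k (D₁ h(0) + D₂ h(-1)) - τ_c A h(0) = g`. -/
theorem stmt_18 (ωc τc k : ℝ) (hωc : 0 < ωc) (hτc : 0 < τc) (hk : 0 ≤ k)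
    (D1 D2 A : Matrix (Fin 2) (Fin 2) ℝ) (g : Fin 2 → ℂ)
    (M : Matrix (Fin 2) (Fin 2) ℂ)
    (hM : M = (2 * (ωc : ℂ) * Complex.I) • (1 : Matrix (Fin 2) (Fin 2) ℂ)
        + ((τc * k : ℝ) : ℂ) • D1.map Complex.ofReal
        + (((τc * k : ℝ) : ℂ) * Complex.exp (-(2 * (ωc : ℂ) * Complex.I))) •
            D2.map Complex.ofReal
        - ((τc : ℝ) : ℂ) • A.map Complex.ofReal)
    (hMinv : IsUnit M)
    (h : ℝ → Fin 2 → ℂ)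
    (hh : ∀ θ : ℝ, h θ = Complex.exp (2 * (ωc : ℂ) * Complex.I * (θ : ℂ)) • (M⁻¹ *ᵥ g)) :
    (∀ θ ∈ Set.Icc (-1 : ℝ) 0, HasDerivAt h ((2 * (ωc : ℂ) * Complex.I) • h θ) θ) ∧
    deriv h 0 + ((τc * k : ℝ) : ℂ) •
        (D1.map Complex.ofReal *ᵥ h 0 + D2.map Complex.ofReal *ᵥ h (-1))
      - ((τc : ℝ) : ℂ) • (A.map Complex.ofReal *ᵥ h 0) = g :=
  stmt_18_general ωc τc k D1 D2 A g M hM hMinv h hh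
end

section
/- Assume a11 < 0, a12 < 0, a21 > 0, a22 < 0, and assume that for every n ∈ ℕ, with P_n = T_n² − 2J_n and Q_n = J_n² − D_n², either (P_n > 0 and Q_n > 0) or P_n² − 4Q_n < 0. Then for every delay τ ≥ 0, every n ∈ ℕ₀ and every λ ∈ ℂ with Re λ ≥ 0, one has Γ_n(λ) ≠ 0; that is, all roots of the characteristic equations of all modes have negative real parts for all τ ∈ [0, ∞). -/
/-!
For `Re λ ≥ 0` and `τ ≥ 0` the delay term satisfies `|D e^{-λτ}| ≤ |D|`, while for `T < 0 < J`
the modulus of `λ² - Tλ + J` only grows as `λ` moves right from the imaginary axis, where its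
square equals `y⁴ + (T² - 2J) y² + J²` with `y = Im λ`. A root would therefore force
`y⁴ + P y² + Q ≤ 0` with `P = T² - 2J`, `Q = J² - D²`, which the hypothesis on `P` and `Q`
excludes for `n ≥ 1`; for `n = 0` we have `D = 0` and the quartic is a positive sum of squares.
The sign conditions on the `aᵢⱼ` give `Tₙ < 0 < Jₙ` for every mode.
-/

open Complex hiding Gamma

/-- `Tₙ = Tr(A) - Tr(D₁) n²/ℓ²`. -/
noncomputable def Tn (ℓ d11 d22 a11 a22 : ℝ) (n : ℕ) : ℝ :=
  (a11 + a22) - (d11 + d22) * (n : ℝ) ^ 2 / ℓ ^ 2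

/-- The characteristic function of mode `n` at delay `τ`:
`Γ(λ) = λ² - Tλ + J + D e^{-λτ}`. -/
noncomputable def Gamma (T J D τ : ℝ) (lam : ℂ) : ℂ :=
  lam ^ 2 - (T : ℂ) * lam + (J : ℂ) + (D : ℂ) * Complex.exp (-lam * (τ : ℂ))

theorem quartic_le_normSq_quadratic {T J : ℝ} (hT : T ≤ 0) (hJ : 0 ≤ J) {lam : ℂ}
    (hre : 0 ≤ lam.re) :
    lam.im ^ 4 + (T ^ 2 - 2 * J) * lam.im ^ 2 + J ^ 2 ≤ normSq (lam ^ 2 - T * lam + J) := by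
  set x := lam.re
  set y := lam.im
  have hnormSq : normSq (lam ^ 2 - T * lam + J)
      = (x ^ 2 - y ^ 2 - T * x + J) ^ 2 + (2 * x * y - T * y) ^ 2 := by
    simp only [normSq_apply, sq lam, sub_re, sub_im, add_re, add_im, mul_re, mul_im,
      ofReal_re, ofReal_im]
    ring
  -- with `a = x (x - T) ≥ 0` the excess over the value at `x = 0` is `a (a + 2J + 2y²)`
  have hexcess : 0 ≤ x * (x - T) * (x * (x - T) + 2 * J + 2 * y ^ 2) := by
    have ha : 0 ≤ x * (x - T) := mul_nonneg hre (by linarith)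
    positivity
  rw [hnormSq]
  nlinarith [hexcess]

theorem normSq_mul_exp_le {D τ : ℝ} (hτ : 0 ≤ τ) {lam : ℂ} (hre : 0 ≤ lam.re) :
    normSq (D * exp (-lam * τ)) ≤ D ^ 2 := by
  have hexp : ‖exp (-lam * τ)‖ ≤ 1 := by
    rw [norm_exp, Real.exp_le_one_iff]
    simpa [mul_re] using mul_nonneg hre hτ
  rw [normSq_mul, normSq_ofReal, normSq_eq_norm_sq, ← sq]
  exact mul_le_of_le_one_right (sq_nonneg D) (pow_le_one₀ (norm_nonneg _) hexp)

theorem Gamma_ne_zero {T J D τ : ℝ} (hT : T < 0) (hJ : 0 < J) (hτ : 0 ≤ τ)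
    (hquartic : ∀ y : ℝ, 0 < y ^ 4 + (T ^ 2 - 2 * J) * y ^ 2 + (J ^ 2 - D ^ 2))
    {lam : ℂ} (hre : 0 ≤ lam.re) : Gamma T J D τ lam ≠ 0 := by
  intro hroot
  have heq : lam ^ 2 - T * lam + J = -(D * exp (-lam * τ)) := by
    unfold Gamma at hroot
    linear_combination hroot
  have hupper : normSq (lam ^ 2 - T * lam + J) ≤ D ^ 2 := by
    rw [heq, normSq_neg]
    exact normSq_mul_exp_le hτ hre
  have hlower := quartic_le_normSq_quadratic hT.le hJ.le hre
  linarith [hquartic lam.im]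

theorem quartic_pos_of_ne_zero {T J : ℝ} (hT : T ≠ 0) (hJ : J ≠ 0) (y : ℝ) :
    0 < y ^ 4 + (T ^ 2 - 2 * J) * y ^ 2 + J ^ 2 := by
  have hsos : y ^ 4 + (T ^ 2 - 2 * J) * y ^ 2 + J ^ 2 = (y ^ 2 - J) ^ 2 + T ^ 2 * y ^ 2 := by
    ring
  rw [hsos]
  rcases eq_or_ne y 0 with rfl | hy
  · simpa using (by positivity : 0 < J ^ 2)
  · positivity

theorem quartic_pos_of_coeff_pos_or_discrim_neg {P Q : ℝ}
    (h : (0 < P ∧ 0 < Q) ∨ P ^ 2 - 4 * Q < 0) (y : ℝ) : 0 < y ^ 4 + P * y ^ 2 + Q := by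
  rcases h with ⟨hP, hQ⟩ | hdiscrim
  · positivity
  · nlinarith [sq_nonneg (y ^ 2 + P / 2)]

theorem Tn_neg {ℓ d11 d22 a11 a22 : ℝ} (h11 : 0 ≤ d11) (h22 : 0 ≤ d22)
    (ha11 : a11 < 0) (ha22 : a22 < 0) (n : ℕ) : Tn ℓ d11 d22 a11 a22 n < 0 := by
  have : 0 ≤ (d11 + d22) * (n : ℝ) ^ 2 / ℓ ^ 2 := by positivity
  unfold Tn
  linarith

theorem Jn_pos {ℓ d11 d22 ξ ustar a11 a12 a21 a22 : ℝ} (h11 : 0 ≤ d11) (h22 : 0 ≤ d22)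
    (hξ : 0 ≤ ξ) (hu : 0 < ustar) (ha11 : a11 < 0) (ha12 : a12 < 0) (ha21 : 0 < a21)
    (ha22 : a22 < 0) (n : ℕ) : 0 < Jn ℓ d11 d22 ξ ustar a11 a12 a21 a22 n := by
  have hquartic : 0 ≤ d11 * d22 * (n : ℝ) ^ 4 / ℓ ^ 4 := by positivity
  have hcoeff : d11 * a22 + d22 * a11 - a21 * ξ * ustar ≤ 0 := by
    nlinarith [mul_nonpos_of_nonneg_of_nonpos h11 ha22.le,
      mul_nonpos_of_nonneg_of_nonpos h22 ha11.le, mul_nonneg ha21.le (mul_nonneg hξ hu.le)]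
  have hquadratic : (d11 * a22 + d22 * a11 - a21 * ξ * ustar) * (n : ℝ) ^ 2 / ℓ ^ 2 ≤ 0 :=
    div_nonpos_of_nonpos_of_nonneg (mul_nonpos_of_nonpos_of_nonneg hcoeff (sq_nonneg _))
      (sq_nonneg _)
  have hdet : 0 < a11 * a22 - a12 * a21 := by
    nlinarith [mul_pos_of_neg_of_neg ha11 ha22, mul_neg_of_neg_of_pos ha12 ha21]
  unfold Jn
  linarith

theorem Dn_zero (ℓ d21 ξ ustar vstar a12 : ℝ) : Dn ℓ d21 ξ ustar vstar a12 0 = 0 := by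
  simp [Dn]

theorem stmt_19_general (ℓ d11 d22 d21 ξ ustar vstar a11 a12 a21 a22 : ℝ)
    (h11 : 0 ≤ d11) (h22 : 0 ≤ d22) (hξ : 0 ≤ ξ)
    (hu : 0 < ustar)
    (ha11 : a11 < 0) (ha12 : a12 < 0) (ha21 : 0 < a21) (ha22 : a22 < 0)
    (hPQ : ∀ n : ℕ, 1 ≤ n →
      (0 < (Tn ℓ d11 d22 a11 a22 n) ^ 2 - 2 * Jn ℓ d11 d22 ξ ustar a11 a12 a21 a22 n ∧
       0 < (Jn ℓ d11 d22 ξ ustar a11 a12 a21 a22 n) ^ 2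
          - (Dn ℓ d21 ξ ustar vstar a12 n) ^ 2) ∨
      ((Tn ℓ d11 d22 a11 a22 n) ^ 2 - 2 * Jn ℓ d11 d22 ξ ustar a11 a12 a21 a22 n) ^ 2
        - 4 * ((Jn ℓ d11 d22 ξ ustar a11 a12 a21 a22 n) ^ 2
            - (Dn ℓ d21 ξ ustar vstar a12 n) ^ 2) < 0) :
    ∀ τ : ℝ, 0 ≤ τ → ∀ n : ℕ, ∀ lam : ℂ, 0 ≤ lam.re →
      Gamma (Tn ℓ d11 d22 a11 a22 n) (Jn ℓ d11 d22 ξ ustar a11 a12 a21 a22 n)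
        (Dn ℓ d21 ξ ustar vstar a12 n) τ lam ≠ 0 := by
  intro τ hτ n lam hre
  have hT := Tn_neg (ℓ := ℓ) h11 h22 ha11 ha22 n
  have hJ := Jn_pos (ℓ := ℓ) h11 h22 hξ hu ha11 ha12 ha21 ha22 n
  refine Gamma_ne_zero hT hJ hτ (fun y ↦ ?_) hre
  rcases n.eq_zero_or_pos with rfl | hn
  · simpa [Dn_zero] using quartic_pos_of_ne_zero hT.ne hJ.ne' y
  · exact quartic_pos_of_coeff_pos_or_discrim_neg (hPQ n hn) y

/-- Under the sign conditions, if for every `n ≥ 1` either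
(`Pₙ > 0` and `Qₙ > 0`) or `Pₙ² - 4Qₙ < 0`, then for every delay `τ ≥ 0`, every
mode `n ∈ ℕ₀` and every `λ` with `Re λ ≥ 0`, one has `Γₙ(λ) ≠ 0`. -/
theorem stmt_19 (ℓ d11 d22 d21 ξ ustar vstar a11 a12 a21 a22 : ℝ)
    (hℓ : 0 < ℓ) (h11 : 0 ≤ d11) (h22 : 0 ≤ d22) (h21 : 0 ≤ d21) (hξ : 0 ≤ ξ)
    (hu : 0 < ustar) (hv : 0 < vstar)
    (ha11 : a11 < 0) (ha12 : a12 < 0) (ha21 : 0 < a21) (ha22 : a22 < 0)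
    (hPQ : ∀ n : ℕ, 1 ≤ n →
      (0 < (Tn ℓ d11 d22 a11 a22 n) ^ 2 - 2 * Jn ℓ d11 d22 ξ ustar a11 a12 a21 a22 n ∧
       0 < (Jn ℓ d11 d22 ξ ustar a11 a12 a21 a22 n) ^ 2
          - (Dn ℓ d21 ξ ustar vstar a12 n) ^ 2) ∨
      ((Tn ℓ d11 d22 a11 a22 n) ^ 2 - 2 * Jn ℓ d11 d22 ξ ustar a11 a12 a21 a22 n) ^ 2
        - 4 * ((Jn ℓ d11 d22 ξ ustar a11 a12 a21 a22 n) ^ 2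
            - (Dn ℓ d21 ξ ustar vstar a12 n) ^ 2) < 0) :
    ∀ τ : ℝ, 0 ≤ τ → ∀ n : ℕ, ∀ lam : ℂ, 0 ≤ lam.re →
      Gamma (Tn ℓ d11 d22 a11 a22 n) (Jn ℓ d11 d22 ξ ustar a11 a12 a21 a22 n)
        (Dn ℓ d21 ξ ustar vstar a12 n) τ lam ≠ 0 :=
  stmt_19_general ℓ d11 d22 d21 ξ ustar vstar a11 a12 a21 a22 h11 h22 hξ hu ha11 ha12 ha21 ha22 hPQ
end
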